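/- arXiv:2004.11146 — 4 statements merged into one kernel-verified Lean document; each statement's English description precedes it below -/
import Mathlib

section
/- The composition of the partial Möbius operators over all n coordinates equals the full Möbius transform: for every Boolean function f : 𝔽₂ⁿ → 𝔽₂, (μ_1 ∘ μ_2 ∘ ⋯ ∘ μ_n)(f) = μ(f), where μ(f)(u) = ∑_{v ≼ u} f(v). -/
/-!
Coordinatewise, `μ_i(f)(u) = ∑_{b ≤ u_i} f(u[i ↦ b])`. Hence applying `μ_i` for `i` in a set `s`
of coordinates sums `f` over the `v` that lie below `u` on `s` and agree with `u` off `s`: in the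
inductive step, the inner sum at `u[a ↦ b]` only sees `v` with `v_a = b`, so the double sum
collapses. For `s` the set of all coordinates this is `μ(f)(u)`.
-/

/-- The partial Möbius operator `μ_i`. -/
def partialMobius {n : ℕ} (i : Fin n) (f : (Fin n → ZMod 2) → ZMod 2) :
    (Fin n → ZMod 2) → ZMod 2 :=
  fun u => if u i = 0 then f u else f (Function.update u i 0) + f u

/-- The full Möbius transform: `μ(f)(u) = ∑_{v ≼ u} f(v)` in `𝔽₂`. -/
def mobius {n : ℕ} (f : (Fin n → ZMod 2) → ZMod 2) : (Fin n → ZMod 2) → ZMod 2 :=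
  fun u => ∑ v : Fin n → ZMod 2, if ∀ i, (v i).val ≤ (u i).val then f v else 0

section

variable {n : ℕ}

def IsBelowOn (s : Finset (Fin n)) (v u : Fin n → ZMod 2) : Prop :=
  ∀ i, (i ∈ s → (v i).val ≤ (u i).val) ∧ (i ∉ s → v i = u i)

instance (s : Finset (Fin n)) (v u : Fin n → ZMod 2) : Decidable (IsBelowOn s v u) := by
  unfold IsBelowOn; infer_instance

lemma isBelowOn_insert_iff {s : Finset (Fin n)} {a : Fin n} (ha : a ∉ s)
    {v u : Fin n → ZMod 2} :
    IsBelowOn (insert a s) v u ↔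
      (v a).val ≤ (u a).val ∧ IsBelowOn s v (Function.update u a (v a)) := by
  constructor
  · intro h
    refine ⟨(h a).1 (Finset.mem_insert_self a s), fun i => ?_⟩
    rcases eq_or_ne i a with rfl | hi
    · simp [ha]
    · simpa [hi] using h i
  · rintro ⟨hva, h⟩ i
    rcases eq_or_ne i a with rfl | hi
    · simpa using hva
    · simpa [hi] using h i

lemma partialMobius_apply_eq_sum (i : Fin n) (f : (Fin n → ZMod 2) → ZMod 2)
    (u : Fin n → ZMod 2) :
    partialMobius i f u =
      ∑ b : ZMod 2, if b.val ≤ (u i).val then f (Function.update u i b) else 0 := by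
  rw [show (Finset.univ : Finset (ZMod 2)) = {0, 1} from rfl, Finset.sum_pair zero_ne_one]
  have hu := Function.update_eq_self i u
  obtain h | h : u i = 0 ∨ u i = 1 := by generalize u i = x; revert x; decide
  all_goals
    rw [h] at hu
    simp [partialMobius, h, hu]

lemma foldr_partialMobius_apply {l : List (Fin n)} (hl : l.Nodup)
    (f : (Fin n → ZMod 2) → ZMod 2) (u : Fin n → ZMod 2) :
    l.foldr partialMobius f u = ∑ v, if IsBelowOn l.toFinset v u then f v else 0 := by
  induction l generalizing u with
  | nil => simp [IsBelowOn, ← funext_iff]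
  | cons a l ih =>
    have ha : a ∉ l.toFinset := List.mem_toFinset.not.mpr (List.nodup_cons.mp hl).1
    calc (a :: l).foldr partialMobius f u
        = ∑ b : ZMod 2, ∑ v, if b.val ≤ (u a).val ∧
            IsBelowOn l.toFinset v (Function.update u a b) then f v else 0 := by
          simp only [List.foldr_cons, partialMobius_apply_eq_sum, ih (List.nodup_cons.mp hl).2,
            ite_and, Finset.sum_ite_irrel, Finset.sum_const_zero]
      _ = ∑ v, ∑ b : ZMod 2, if b.val ≤ (u a).val ∧
            IsBelowOn l.toFinset v (Function.update u a b) then f v else 0 := Finset.sum_comm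
      _ = ∑ v, if IsBelowOn (a :: l).toFinset v u then f v else 0 := by
          refine Finset.sum_congr rfl fun v _ => ?_
          rw [Finset.sum_eq_single (v a)]
          · rw [List.toFinset_cons]
            exact if_congr (isBelowOn_insert_iff ha).symm rfl rfl
          · rintro b - hb
            exact if_neg fun h => hb (by simpa using ((h.2 a).2 ha).symm)
          · simp

end

/-- the composition of the partial Möbius operators over all `n`
coordinates, `μ_1 ∘ μ_2 ∘ ⋯ ∘ μ_n`, equals the full Möbius transform. -/
theorem foldr_partialMobius_eq_mobius {n : ℕ} (f : (Fin n → ZMod 2) → ZMod 2) :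
    (List.finRange n).foldr partialMobius f = mobius f := by
  funext u
  rw [foldr_partialMobius_apply (List.nodup_finRange n), mobius]
  simp [IsBelowOn]
end

section
/- The Möbius transform is multiplication by ∏_{i=1}^{n}(1 + X_i) in the quotient ring: for every f : 𝔽₂ⁿ → 𝔽₂, the image in R_n = 𝔽₂[X_1, …, X_n]/⟨X_1², …, X_n²⟩ of the polynomial P_{μ(f)} equals the image of P_f multiplied by the image of ∏_{i=1}^{n}(1 + X_i). -/
/-- The multilinear polynomial form `P_f = ∑_u f(u) X^u` of a Boolean function. -/
noncomputable def polyForm {n : ℕ} (f : (Fin n → ZMod 2) → ZMod 2) :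
    MvPolynomial (Fin n) (ZMod 2) :=
  ∑ u : Fin n → ZMod 2,
    MvPolynomial.C (f u) * ∏ i ∈ Finset.univ.filter (fun i => u i = 1), MvPolynomial.X i

/-- The ideal `⟨X_1², …, X_n²⟩`. -/
noncomputable def sqIdeal (n : ℕ) : Ideal (MvPolynomial (Fin n) (ZMod 2)) :=
  Ideal.span (Set.range fun i : Fin n => (MvPolynomial.X i) ^ 2)

open Finset MvPolynomial

section Aux

variable {n : ℕ}

/-- support set of a boolean vector -/
def fset (u : Fin n → ZMod 2) : Finset (Fin n) := Finset.univ.filter (fun i => u i = 1)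

/-- boolean vector of a set -/
def ofSet (S : Finset (Fin n)) : Fin n → ZMod 2 := fun i => if i ∈ S then 1 else 0

lemma ofSet_fset (u : Fin n → ZMod 2) : ofSet (fset u) = u := by
  funext i
  simp only [ofSet, fset, mem_filter, mem_univ, true_and]
  revert u; intro u
  generalize u i = a
  revert a; decide

lemma fset_ofSet (S : Finset (Fin n)) : fset (ofSet S) = S := by
  ext i
  simp [fset, ofSet]

lemma le_iff_fset_subset (v u : Fin n → ZMod 2) :
    (∀ i, (v i).val ≤ (u i).val) ↔ fset v ⊆ fset u := by
  simp only [Finset.subset_iff, fset, mem_filter, mem_univ, true_and]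
  constructor
  · intro h i hi
    have := h i
    revert this hi
    generalize v i = a; generalize u i = b
    revert a b; decide
  · intro h i
    have := @h i
    revert this
    generalize v i = a; generalize u i = b
    revert a b; decide

/-- key algebraic identity for square-zero elements -/
lemma key {R : Type*} [CommRing R] (y : Fin n → R) (hy : ∀ i, y i ^ 2 = 0) (S : Finset (Fin n)) :
    (∏ i ∈ S, y i) * ∏ i : Fin n, (1 + y i) =
      ∑ T ∈ Sᶜ.powerset, ∏ i ∈ S ∪ T, y i := by
  have hsplit : (∏ i : Fin n, (1 + y i)) = (∏ i ∈ S, (1 + y i)) * ∏ i ∈ Sᶜ, (1 + y i) := by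
    rw [Finset.prod_mul_prod_compl]
  have habs : (∏ i ∈ S, y i) * ∏ i ∈ S, (1 + y i) = ∏ i ∈ S, y i := by
    rw [← Finset.prod_mul_distrib]
    refine Finset.prod_congr rfl fun i _ => ?_
    have := hy i
    ring_nf
    rw [this, add_zero]
  have hexp : (∏ i ∈ Sᶜ, (1 + y i)) = ∑ T ∈ Sᶜ.powerset, ∏ i ∈ T, y i := by
    have := Finset.prod_add y (fun _ => (1 : R)) Sᶜ
    simp only [Finset.prod_const_one, mul_one] at this
    calc (∏ i ∈ Sᶜ, (1 + y i)) = ∏ i ∈ Sᶜ, (y i + 1) := by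
          refine Finset.prod_congr rfl fun i _ => add_comm _ _
      _ = _ := this
  rw [hsplit, ← mul_assoc, habs, hexp, Finset.mul_sum]
  refine Finset.sum_congr rfl fun T hT => ?_
  rw [Finset.mem_powerset] at hT
  rw [Finset.prod_union (Finset.disjoint_left.mpr fun a ha hb =>
    (Finset.mem_compl.mp (hT hb)) ha)]

end Aux

/-- in `R_n = 𝔽₂[X_1,…,X_n]/⟨X_i²⟩`, the image of `P_{μ(f)}` equals the
image of `P_f` multiplied by the image of `∏_{i=1}^{n} (1 + X_i)`. -/
theorem polyForm_mobius {n : ℕ} (f : (Fin n → ZMod 2) → ZMod 2) :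
    Ideal.Quotient.mk (sqIdeal n) (polyForm (mobius f)) =
      Ideal.Quotient.mk (sqIdeal n) (polyForm f) *
        Ideal.Quotient.mk (sqIdeal n) (∏ i : Fin n, (1 + MvPolynomial.X i)) := by
  set mk := Ideal.Quotient.mk (sqIdeal n) with hmk
  set y : Fin n → MvPolynomial (Fin n) (ZMod 2) ⧸ sqIdeal n := fun i => mk (X i) with hy
  have hy2 : ∀ i, y i ^ 2 = 0 := by
    intro i
    rw [hy]
    show (mk (X i)) ^ 2 = 0
    rw [← map_pow, hmk, Ideal.Quotient.eq_zero_iff_mem]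
    exact Ideal.subset_span ⟨i, rfl⟩
  have hpoly : ∀ g : (Fin n → ZMod 2) → ZMod 2,
      mk (polyForm g) = ∑ u : Fin n → ZMod 2, mk (C (g u)) * ∏ i ∈ fset u, y i := by
    intro g
    rw [polyForm, map_sum]
    refine Finset.sum_congr rfl fun u _ => ?_
    rw [map_mul, map_prod]
    rfl
  rw [hpoly, hpoly]
  have hQ : mk (∏ i : Fin n, (1 + X i)) = ∏ i : Fin n, (1 + y i) := by
    rw [map_prod]
    simp [hy]
  rw [hQ, Finset.sum_mul]
  -- expand LHS mobius
  have hmob : ∀ u, mk (C (mobius f u)) =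
      ∑ v : Fin n → ZMod 2, if ∀ i, (v i).val ≤ (u i).val then mk (C (f v)) else 0 := by
    intro u
    rw [mobius, map_sum, map_sum]
    refine Finset.sum_congr rfl fun v _ => ?_
    split <;> simp
  calc (∑ u : Fin n → ZMod 2, mk (C (mobius f u)) * ∏ i ∈ fset u, y i)
      = ∑ u : Fin n → ZMod 2, ∑ v : Fin n → ZMod 2,
          (if ∀ i, (v i).val ≤ (u i).val then mk (C (f v)) else 0) * ∏ i ∈ fset u, y i := by
        refine Finset.sum_congr rfl fun u _ => ?_
        rw [hmob, Finset.sum_mul]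
    _ = ∑ v : Fin n → ZMod 2, ∑ u : Fin n → ZMod 2,
          (if ∀ i, (v i).val ≤ (u i).val then mk (C (f v)) else 0) * ∏ i ∈ fset u, y i :=
        Finset.sum_comm
    _ = ∑ v : Fin n → ZMod 2, mk (C (f v)) *
          ∑ u ∈ Finset.univ.filter (fun u => fset v ⊆ fset u), ∏ i ∈ fset u, y i := by
        refine Finset.sum_congr rfl fun v _ => ?_
        rw [Finset.mul_sum, Finset.sum_filter]
        refine Finset.sum_congr rfl fun u _ => ?_
        by_cases h : fset v ⊆ fset u
        · rw [if_pos ((le_iff_fset_subset v u).mpr h), if_pos h]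
        · rw [if_neg (fun hh => h ((le_iff_fset_subset v u).mp hh)), if_neg h, zero_mul]
    _ = ∑ v : Fin n → ZMod 2, mk (C (f v)) * ((∏ i ∈ fset v, y i) * ∏ i : Fin n, (1 + y i)) := by
        refine Finset.sum_congr rfl fun v _ => ?_
        congr 1
        rw [key y hy2 (fset v)]
        refine Finset.sum_nbij' (fun u => fset u \ fset v)
          (fun T => ofSet (fset v ∪ T)) ?_ ?_ ?_ ?_ ?_
        · intro u hu
          rw [Finset.mem_filter] at hu
          rw [Finset.mem_powerset]
          intro a ha
          rw [Finset.mem_sdiff] at ha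
          rw [Finset.mem_compl]
          exact ha.2
        · intro T hT
          exact Finset.mem_filter.mpr ⟨Finset.mem_univ _, by
            rw [fset_ofSet]; exact Finset.subset_union_left⟩
        · intro u hu
          rw [Finset.mem_filter] at hu
          show ofSet (fset v ∪ (fset u \ fset v)) = u
          rw [Finset.union_sdiff_of_subset hu.2, ofSet_fset]
        · intro T hT
          rw [Finset.mem_powerset] at hT
          show fset (ofSet (fset v ∪ T)) \ fset v = T
          rw [fset_ofSet, union_sdiff_cancel_left
            (Finset.disjoint_left.mpr fun a ha hb => (Finset.mem_compl.mp (hT hb)) ha)]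
        · intro u hu
          rw [Finset.mem_filter] at hu
          show (∏ i ∈ fset u, y i) = ∏ i ∈ fset v ∪ (fset u \ fset v), y i
          rw [Finset.union_sdiff_of_subset hu.2]
    _ = ∑ u : Fin n → ZMod 2, mk (C (f u)) * (∏ i ∈ fset u, y i) * ∏ i : Fin n, (1 + y i) := by
        refine Finset.sum_congr rfl fun u _ => ?_
        ring
end

section
/- Möbius transform of a factored sum of two monomials over a partition: let I, J, K be a partition of [n] (pairwise disjoint with union [n]). Then in the quotient ring R_n = 𝔽₂[X_1, …, X_n]/⟨X_1², …, X_n²⟩, the image of X^I (X^J + X^K) · ∏_{i=1}^{n}(1 + X_i) equals the image of X^I · ( X^J ∏_{k ∈ K}(1 + X_k) + X^K ∏_{j ∈ J}(1 + X_j) ). -/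
lemma absorb {n : ℕ} (S : Finset (Fin n)) :
    Ideal.Quotient.mk (sqIdeal n) (∏ i ∈ S, MvPolynomial.X i) *
      Ideal.Quotient.mk (sqIdeal n) (∏ i ∈ S, (1 + MvPolynomial.X i)) =
    Ideal.Quotient.mk (sqIdeal n) (∏ i ∈ S, MvPolynomial.X i) := by
  rw [← map_mul, ← Finset.prod_mul_distrib, map_prod, map_prod]
  refine Finset.prod_congr rfl fun i _ => ?_
  have h : Ideal.Quotient.mk (sqIdeal n) ((MvPolynomial.X i : MvPolynomial (Fin n) (ZMod 2)) ^ 2) = 0 := by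
    rw [Ideal.Quotient.eq_zero_iff_mem]
    exact Ideal.subset_span ⟨i, rfl⟩
  have : (MvPolynomial.X i : MvPolynomial (Fin n) (ZMod 2)) * (1 + MvPolynomial.X i)
      = MvPolynomial.X i + MvPolynomial.X i ^ 2 := by ring
  rw [this, map_add, h, add_zero]

/-- for a partition `I, J, K` of `[n]`, in
`R_n = 𝔽₂[X_1,…,X_n]/⟨X_i²⟩` the image of `X^I (X^J + X^K) ∏_i (1 + X_i)` equals the
image of `X^I (X^J ∏_{k ∈ K} (1 + X_k) + X^K ∏_{j ∈ J} (1 + X_j))`. -/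
theorem mobius_factored_partition {n : ℕ} (I J K : Finset (Fin n))
    (hIJ : Disjoint I J) (hIK : Disjoint I K) (hJK : Disjoint J K)
    (hunion : I ∪ J ∪ K = Finset.univ) :
    Ideal.Quotient.mk (sqIdeal n)
        ((∏ i ∈ I, MvPolynomial.X i) *
          ((∏ j ∈ J, MvPolynomial.X j) + (∏ k ∈ K, MvPolynomial.X k)) *
          ∏ i : Fin n, (1 + MvPolynomial.X i)) =
      Ideal.Quotient.mk (sqIdeal n)
        ((∏ i ∈ I, MvPolynomial.X i) *
          ((∏ j ∈ J, MvPolynomial.X j) * (∏ k ∈ K, (1 + MvPolynomial.X k)) +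
           (∏ k ∈ K, MvPolynomial.X k) * (∏ j ∈ J, (1 + MvPolynomial.X j)))) := by
  have hsplit : (∏ i : Fin n, (1 + MvPolynomial.X i : MvPolynomial (Fin n) (ZMod 2)))
      = (∏ i ∈ I, (1 + MvPolynomial.X i)) * (∏ i ∈ J, (1 + MvPolynomial.X i)) *
        (∏ i ∈ K, (1 + MvPolynomial.X i)) := by
    rw [← hunion, Finset.prod_union (by
      simpa using Finset.disjoint_union_left.mpr ⟨hIK, hJK⟩),
      Finset.prod_union hIJ]
  rw [hsplit]
  set q := Ideal.Quotient.mk (sqIdeal n)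
  have hI := absorb I
  have hJ := absorb J
  have hK := absorb K
  set aI := q (∏ i ∈ I, MvPolynomial.X i)
  set aJ := q (∏ i ∈ J, MvPolynomial.X i)
  set aK := q (∏ i ∈ K, MvPolynomial.X i)
  set bI := q (∏ i ∈ I, (1 + MvPolynomial.X i))
  set bJ := q (∏ i ∈ J, (1 + MvPolynomial.X i))
  set bK := q (∏ i ∈ K, (1 + MvPolynomial.X i))
  show q _ = q _
  simp only [map_mul, map_add]
  show aI * (aJ + aK) * (bI * bJ * bK) = aI * (aJ * bK + aK * bJ)
  calc aI * (aJ + aK) * (bI * bJ * bK)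
      = (aI * bI) * ((aJ * bJ) * bK + (aK * bK) * bJ) := by ring
    _ = aI * (aJ * bK + aK * bJ) := by rw [hI, hJ, hK]
end

section
/- Möbius transform of a factored sum of two monomials, general case: let I, J, K ⊆ [n] be pairwise disjoint and set L = I ∪ J ∪ K. Then in the quotient ring R_n = 𝔽₂[X_1, …, X_n]/⟨X_1², …, X_n²⟩, the image of X^I (X^J + X^K) · ∏_{i=1}^{n}(1 + X_i) equals the image of ∏_{ℓ ∈ [n] ∖ L}(1 + X_ℓ) · X^I · ( X^J ∏_{k ∈ K}(1 + X_k) + X^K ∏_{j ∈ J}(1 + X_j) ). -/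
lemma mk_absorb {n : ℕ} (S : Finset (Fin n)) :
    Ideal.Quotient.mk (sqIdeal n)
        ((∏ i ∈ S, MvPolynomial.X i) * ∏ i ∈ S, (1 + MvPolynomial.X i)) =
      Ideal.Quotient.mk (sqIdeal n) (∏ i ∈ S, MvPolynomial.X i) := by
  rw [← Finset.prod_mul_distrib, map_prod, map_prod]
  refine Finset.prod_congr rfl fun i _ => ?_
  rw [Ideal.Quotient.eq]
  have h : MvPolynomial.X (R := ZMod 2) i * (1 + MvPolynomial.X i) - MvPolynomial.X i
      = (MvPolynomial.X i) ^ 2 := by ring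
  rw [h]
  exact Ideal.subset_span ⟨i, rfl⟩

/-- for pairwise disjoint `I, J, K ⊆ [n]` with `L = I ∪ J ∪ K`, in
`R_n = 𝔽₂[X_1,…,X_n]/⟨X_i²⟩` the image of `X^I (X^J + X^K) ∏_i (1 + X_i)` equals the
image of `∏_{ℓ ∉ L} (1 + X_ℓ) · X^I (X^J ∏_{k ∈ K} (1 + X_k) + X^K ∏_{j ∈ J} (1 + X_j))`. -/
theorem mobius_factored_general {n : ℕ} (I J K : Finset (Fin n))
    (hIJ : Disjoint I J) (hIK : Disjoint I K) (hJK : Disjoint J K) :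
    Ideal.Quotient.mk (sqIdeal n)
        ((∏ i ∈ I, MvPolynomial.X i) *
          ((∏ j ∈ J, MvPolynomial.X j) + (∏ k ∈ K, MvPolynomial.X k)) *
          ∏ i : Fin n, (1 + MvPolynomial.X i)) =
      Ideal.Quotient.mk (sqIdeal n)
        ((∏ l ∈ (I ∪ J ∪ K)ᶜ, (1 + MvPolynomial.X l)) *
          (∏ i ∈ I, MvPolynomial.X i) *
          ((∏ j ∈ J, MvPolynomial.X j) * (∏ k ∈ K, (1 + MvPolynomial.X k)) +
           (∏ k ∈ K, MvPolynomial.X k) * (∏ j ∈ J, (1 + MvPolynomial.X j)))) := by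
  have hsplit : (∏ i : Fin n, (1 + MvPolynomial.X (R := ZMod 2) i)) =
      ((∏ i ∈ I, (1 + MvPolynomial.X i)) * (∏ i ∈ J, (1 + MvPolynomial.X i)) *
        (∏ i ∈ K, (1 + MvPolynomial.X i))) * ∏ i ∈ (I ∪ J ∪ K)ᶜ, (1 + MvPolynomial.X i) := by
    rw [← Finset.prod_union hIJ,
      ← Finset.prod_union (Finset.disjoint_union_left.mpr ⟨hIK, hJK⟩)]
    exact (Finset.prod_mul_prod_compl (I ∪ J ∪ K) _).symm
  rw [hsplit]
  set q := Ideal.Quotient.mk (sqIdeal n)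
  have hI := mk_absorb I
  have hJ := mk_absorb J
  have hK := mk_absorb K
  simp only [map_mul, map_add] at *
  set a := q (∏ i ∈ I, MvPolynomial.X i)
  set b := q (∏ i ∈ J, MvPolynomial.X i)
  set c := q (∏ i ∈ K, MvPolynomial.X i)
  set A := q (∏ i ∈ I, (1 + MvPolynomial.X i))
  set B := q (∏ i ∈ J, (1 + MvPolynomial.X i))
  set C := q (∏ i ∈ K, (1 + MvPolynomial.X i))
  set D := q (∏ i ∈ (I ∪ J ∪ K)ᶜ, (1 + MvPolynomial.X i))
  linear_combination ((b * B + c * B) * C * D) * hI + (a * C * D) * hJ + (a * B * D) * hK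
end
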